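/- arXiv:2109.01600 — 2 statements merged into one kernel-verified Lean document; each statement's English description precedes it below -/
import Mathlib

section
/- Let G be a digraph, and for each vertex u of G construct a gadget with k+1 vertices u⁻, u⁺, u₁, …, u_{k−1} where {u⁻, u₁, …, u_{k−1}} and {u⁺, u₁, …, u_{k−1}} induce symmetric complete digraphs and u⁻u⁺ is an arc, and for each arc uv of G add the arc u⁺v⁻. Then the resulting digraph G′ satisfies Δ_min(G′) ≤ k, and G is k-dicolourable if and only if G′ is k-dicolourable. -/
/-- A digraph: no loops, no parallel arcs (arcs given by a relation), digons allowed. -/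
structure Digraph' (V : Type) where
  Adj : V → V → Prop
  irrefl : ∀ v, ¬ Adj v v

namespace Digraph'

variable {V : Type} (G : Digraph' V)

/-- Out-degree of a vertex. -/
noncomputable def outDeg (v : V) : ℕ := Nat.card {w : V // G.Adj v w}

/-- In-degree of a vertex. -/
noncomputable def inDeg (v : V) : ℕ := Nat.card {w : V // G.Adj w v}

/-- `d_min(v) = min(d⁺(v), d⁻(v))`. -/
noncomputable def dmin (v : V) : ℕ := min (G.outDeg v) (G.inDeg v)

/-- `d_max(v) = max(d⁺(v), d⁻(v))`. -/
noncomputable def dmax (v : V) : ℕ := max (G.outDeg v) (G.inDeg v)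

/-- `Δ_min(G) = max_v min(d⁺(v), d⁻(v))`. -/
noncomputable def DeltaMin : ℕ := sSup (Set.range G.dmin)

/-- `Δ_max(G) = max_v max(d⁺(v), d⁻(v))`. -/
noncomputable def DeltaMax : ℕ := sSup (Set.range G.dmax)

/-- A set of vertices is acyclic if it carries no directed cycle. -/
def AcyclicSet (S : Set V) : Prop :=
  ∀ v : V, ¬ Relation.TransGen (fun x y => x ∈ S ∧ y ∈ S ∧ G.Adj x y) v v

/-- `G` is `k`-dicolourable: its vertex set partitions into `k` acyclic colour classes. -/
def Dicolourable (k : ℕ) : Prop :=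
  ∃ f : V → Fin k, ∀ c : Fin k, G.AcyclicSet {v | f v = c}

/-- The dichromatic number. -/
noncomputable def dichromaticNumber : ℕ := sInf {k | G.Dicolourable k}

/-- `G` is connected (its underlying undirected graph is connected). -/
def Connected : Prop :=
  Nonempty V ∧ ∀ x y : V, Relation.ReflTransGen (fun a b => G.Adj a b ∨ G.Adj b a) x y

/-- The subdigraph induced on a set of vertices. -/
def induce (S : Set V) : Digraph' S :=
  ⟨fun a b => G.Adj a b, fun a h => G.irrefl a h⟩

/-- The connected component (of the underlying graph) containing `v`. -/
def component (v : V) : Set V :=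
  {u | Relation.ReflTransGen (fun a b => G.Adj a b ∨ G.Adj b a) v u}

/-- `G` is a directed cycle. -/
def IsDirectedCycle : Prop :=
  ∃ n : ℕ, 2 ≤ n ∧ ∃ e : V ≃ ZMod n, ∀ x y : V, G.Adj x y ↔ e y = e x + 1

/-- `G` is a symmetric cycle of odd length. -/
def IsSymmetricOddCycle : Prop :=
  ∃ n : ℕ, 3 ≤ n ∧ Odd n ∧ ∃ e : V ≃ ZMod n,
    ∀ x y : V, G.Adj x y ↔ (e y = e x + 1 ∨ e x = e y + 1)

/-- `G` is a symmetric complete digraph (a digon between any two distinct vertices). -/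
def IsSymmetricComplete : Prop := ∀ x y : V, G.Adj x y ↔ x ≠ y

/-- `G` is a member of `𝓑_k`: directed cycles for `k = 1`, symmetric odd cycles for
`k = 2`, and the symmetric complete digraph on `k+1` vertices for `k ≥ 3`. -/
def IsException (k : ℕ) : Prop :=
  (k = 1 ∧ G.IsDirectedCycle) ∨ (k = 2 ∧ G.IsSymmetricOddCycle) ∨
  (3 ≤ k ∧ G.IsSymmetricComplete ∧ Nat.card V = k + 1)

end Digraph'

namespace Digraph'

/-- The gadget digraph `G′`: each vertex `u` of `G` is replaced by `k + 1` vertices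
`u⁻ = (u, 0)`, `u⁺ = (u, 1)` and `u_1, …, u_{k−1}` (the `(u, i)` with `i ≥ 2`);
`{u⁻, u₁, …, u_{k−1}}` and `{u⁺, u₁, …, u_{k−1}}` induce symmetric complete
digraphs, `u⁻u⁺` is an arc, and for every arc `uv` of `G` the arc `u⁺v⁻` is added. -/
def gadget {V : Type} (G : Digraph' V) (k : ℕ) : Digraph' (V × Fin (k + 1)) where
  Adj a b :=
    (a.1 = b.1 ∧
      ((a.2.val = 0 ∧ b.2.val = 1) ∨
       (a.2 ≠ b.2 ∧ 2 ≤ a.2.val ∧ 2 ≤ b.2.val) ∨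
       (a.2.val = 0 ∧ 2 ≤ b.2.val) ∨ (2 ≤ a.2.val ∧ b.2.val = 0) ∨
       (a.2.val = 1 ∧ 2 ≤ b.2.val) ∨ (2 ≤ a.2.val ∧ b.2.val = 1))) ∨
    (G.Adj a.1 b.1 ∧ a.2.val = 1 ∧ b.2.val = 0)
  irrefl := by
    rintro ⟨u, i⟩ h
    rcases h with ⟨-, h⟩ | ⟨h, -, -⟩
    · rcases h with ⟨h1, h2⟩ | ⟨h1, -⟩ | ⟨h1, h2⟩ | ⟨h1, h2⟩ | ⟨h1, h2⟩ | ⟨h1, h2⟩ <;>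
        first | exact h1 rfl | omega
    · exact G.irrefl u h

end Digraph'

open Fin.NatCast
namespace GadgetAux

open Digraph' Relation

variable {V : Type}

lemma card_subtype_ne {k : ℕ} (i : Fin (k+1)) :
    Nat.card {j : Fin (k+1) // j ≠ i} = k := by
  rw [Nat.card_eq_fintype_card]
  have : Fintype.card {j : Fin (k+1) // ¬ (j = i)} =
      Fintype.card (Fin (k+1)) - Fintype.card {j : Fin (k+1) // j = i} :=
    Fintype.card_subtype_compl _
  simp only [Fintype.card_subtype_eq, Fintype.card_fin] at this
  exact this

lemma card_le_aux [Fintype V] {k : ℕ} (u : V) (i : Fin (k+1))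
    (p : V × Fin (k+1) → Prop) (hp : ∀ w, p w → w.1 = u ∧ w.2 ≠ i) :
    Nat.card {w // p w} ≤ k := by
  have h1 : Nat.card {w : V × Fin (k+1) // p w} ≤ Nat.card {j : Fin (k+1) // j ≠ i} := by
    apply Nat.card_le_card_of_injective (fun w => ⟨w.1.2, (hp w.1 w.2).2⟩)
    intro a b hab
    have ha := hp a.1 a.2
    have hb := hp b.1 b.2
    have h2 : a.1.2 = b.1.2 := congrArg Subtype.val hab
    exact Subtype.ext (Prod.ext_iff.mpr ⟨ha.1.trans hb.1.symm, h2⟩)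
  exact h1.trans_eq (card_subtype_ne i)

lemma dmin_le [Fintype V] (G : Digraph' V) (k : ℕ) (a : V × Fin (k+1)) :
    (G.gadget k).dmin a ≤ k := by
  obtain ⟨u, i⟩ := a
  rcases Nat.lt_or_ge i.val 2 with h2 | h2
  · rcases (show i.val = 0 ∨ i.val = 1 by omega) with h0 | h1
    · -- i = 0 : bound out-degree
      refine le_trans (min_le_left _ _) ?_
      apply card_le_aux u i
      rintro ⟨v, j⟩ hw
      rcases hw with ⟨h1, hc⟩ | ⟨_, hA, hB⟩
      · dsimp only at h1 hc
        refine ⟨h1.symm, ?_⟩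
        intro hji
        have hji' : j = i := hji
        rw [hji'] at hc
        rcases hc with ⟨hx, hy⟩ | ⟨hx, _⟩ | ⟨hx, hy⟩ | ⟨hx, hy⟩ | ⟨hx, hy⟩ | ⟨hx, hy⟩ <;>
          first | exact hx rfl | omega
      · dsimp only at hA hB
        omega
    · -- i = 1 : bound in-degree
      refine le_trans (min_le_right _ _) ?_
      apply card_le_aux u i
      rintro ⟨v, j⟩ hw
      rcases hw with ⟨h1', hc⟩ | ⟨_, hA, hB⟩
      · dsimp only at h1' hc
        refine ⟨h1', ?_⟩
        intro hji
        have hji' : j = i := hji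
        rw [hji'] at hc
        rcases hc with ⟨hx, hy⟩ | ⟨hx, _⟩ | ⟨hx, hy⟩ | ⟨hx, hy⟩ | ⟨hx, hy⟩ | ⟨hx, hy⟩ <;>
          first | exact hx rfl | omega
      · dsimp only at hA hB
        omega
  · -- 2 ≤ i : bound out-degree
    refine le_trans (min_le_left _ _) ?_
    apply card_le_aux u i
    rintro ⟨v, j⟩ hw
    rcases hw with ⟨h1, hc⟩ | ⟨_, hA, hB⟩
    · dsimp only at h1 hc
      refine ⟨h1.symm, ?_⟩
      intro hji
      have hji' : j = i := hji
      rw [hji'] at hc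
      rcases hc with ⟨hx, hy⟩ | ⟨hx, _⟩ | ⟨hx, hy⟩ | ⟨hx, hy⟩ | ⟨hx, hy⟩ | ⟨hx, hy⟩ <;>
        first | exact hx rfl | omega
    · dsimp only at hA hB
      omega

/-- The colouring of the gadget obtained from a colouring `f` of `G`. -/
noncomputable def fwdCol (k : ℕ) [NeZero k] (f : V → Fin k) (w : V × Fin (k+1)) : Fin k :=
  if w.2.val ≤ 1 then f w.1 else f w.1 + ((w.2.val - 1 : ℕ) : Fin k)

lemma cast_ne_zero {k : ℕ} [NeZero k] {j : Fin (k+1)} (h2 : 2 ≤ j.val) :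
    ((j.val - 1 : ℕ) : Fin k) ≠ 0 := by
  have hlt : j.val - 1 < k := by have := j.isLt; omega
  intro h
  have := Fin.val_cast_of_lt (n := k) hlt
  rw [h] at this
  simp at this
  omega

lemma cast_inj {k : ℕ} [NeZero k] {i j : Fin (k+1)} (hi : 2 ≤ i.val) (hj : 2 ≤ j.val)
    (h : ((i.val - 1 : ℕ) : Fin k) = ((j.val - 1 : ℕ) : Fin k)) : i = j := by
  have hi' : i.val - 1 < k := by have := i.isLt; omega
  have hj' : j.val - 1 < k := by have := j.isLt; omega
  have := congrArg Fin.val h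
  rw [Fin.val_cast_of_lt hi', Fin.val_cast_of_lt hj'] at this
  exact Fin.ext (by omega)

lemma no_digon (G : Digraph' V) {S : Set V} (hS : G.AcyclicSet S) {x y : V}
    (hx : x ∈ S) (hy : y ∈ S) (h1 : G.Adj x y) (h2 : G.Adj y x) : False :=
  hS x (Relation.TransGen.tail (Relation.TransGen.single ⟨hx, hy, h1⟩) ⟨hy, hx, h2⟩)

lemma gadget_digon (G : Digraph' V) (k : ℕ) (u : V) {i j : Fin (k+1)} (hij : i ≠ j)
    (h : (i.val ≠ 1 ∧ j.val ≠ 1) ∨ (i.val ≠ 0 ∧ j.val ≠ 0)) :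
    (G.gadget k).Adj (u, i) (u, j) := by
  left
  refine ⟨rfl, ?_⟩
  have hv : i.val ≠ j.val := fun hh => hij (Fin.ext hh)
  have hi := i.isLt
  have hj := j.isLt
  show (i.val = 0 ∧ j.val = 1) ∨ (i ≠ j ∧ 2 ≤ i.val ∧ 2 ≤ j.val) ∨
    (i.val = 0 ∧ 2 ≤ j.val) ∨ (2 ≤ i.val ∧ j.val = 0) ∨
    (i.val = 1 ∧ 2 ≤ j.val) ∨ (2 ≤ i.val ∧ j.val = 1)
  rcases Nat.lt_or_ge i.val 2 with hi2 | hi2 <;> rcases Nat.lt_or_ge j.val 2 with hj2 | hj2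
  · -- both < 2 : impossible given h and distinctness
    omega
  · rcases (show i.val = 0 ∨ i.val = 1 by omega) with h0 | h1
    · exact Or.inr (Or.inr (Or.inl ⟨h0, hj2⟩))
    · exact Or.inr (Or.inr (Or.inr (Or.inr (Or.inl ⟨h1, hj2⟩))))
  · rcases (show j.val = 0 ∨ j.val = 1 by omega) with h0 | h1
    · exact Or.inr (Or.inr (Or.inr (Or.inl ⟨hi2, h0⟩)))
    · exact Or.inr (Or.inr (Or.inr (Or.inr (Or.inr ⟨hi2, h1⟩))))
  · exact Or.inr (Or.inl ⟨hij, hi2, hj2⟩)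

end GadgetAux

/-- The gadget digraph `G′` satisfies `Δ_min(G′) ≤ k`, and `G` is `k`-dicolourable
iff `G′` is `k`-dicolourable. -/
theorem gadget_correct {V : Type} [Fintype V] (G : Digraph' V) (k : ℕ)
    (hk : 2 ≤ k) :
    (G.gadget k).DeltaMin ≤ k ∧
      (G.Dicolourable k ↔ (G.gadget k).Dicolourable k) := by
  classical
  haveI : NeZero k := ⟨by omega⟩
  constructor
  · -- Δ_min(G') ≤ k
    apply csSup_le'
    rintro x ⟨a, rfl⟩
    exact GadgetAux.dmin_le G k a
  · constructor
    · -- forward: G k-dicolourable → G' k-dicolourable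
      rintro ⟨f, hf⟩
      refine ⟨GadgetAux.fwdCol k f, ?_⟩
      intro c
      intro w hw
      set S' : Set (V × Fin (k+1)) := {v | GadgetAux.fwdCol k f v = c} with hS'
      set R : V → V → Prop := fun x y => x ∈ {v | f v = c} ∧ y ∈ {v | f v = c} ∧ G.Adj x y
        with hR
      -- classify arcs inside the colour class
      have classify : ∀ a b : V × Fin (k+1), a ∈ S' → b ∈ S' → (G.gadget k).Adj a b →
          (a.1 = b.1 ∧ a.2.val = 0 ∧ b.2.val = 1) ∨ R a.1 b.1 := by
        rintro ⟨u, i⟩ ⟨v, j⟩ ha hb hadj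
        simp only [hS', Set.mem_setOf_eq, GadgetAux.fwdCol] at ha hb
        rcases hadj with ⟨huv, hc⟩ | ⟨hA, hi1, hj0⟩
        · dsimp only at huv hc
          rcases hc with ⟨hi0, hj1⟩ | ⟨hne, hi2, hj2⟩ | ⟨hi0, hj2⟩ | ⟨hi2, hj0⟩ |
            ⟨hi1, hj2⟩ | ⟨hi2, hj1⟩
          · exact Or.inl ⟨huv, hi0, hj1⟩
          · exfalso
            rw [if_neg (by omega)] at ha
            rw [if_neg (by omega)] at hb
            have huv' : u = v := huv
            rw [← huv'] at hb
            have : ((i.val - 1 : ℕ) : Fin k) = ((j.val - 1 : ℕ) : Fin k) :=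
              add_left_cancel (ha.trans hb.symm)
            exact hne (GadgetAux.cast_inj hi2 hj2 this)
          · exfalso
            rw [if_pos (by omega)] at ha
            rw [if_neg (by omega)] at hb
            have huv' : u = v := huv
            rw [← huv'] at hb
            have : ((j.val - 1 : ℕ) : Fin k) = 0 :=
              add_eq_left.mp (by rw [hb, ← ha])
            exact GadgetAux.cast_ne_zero hj2 this
          · exfalso
            rw [if_neg (by omega)] at ha
            rw [if_pos (by omega)] at hb
            have huv' : u = v := huv
            rw [← huv'] at hb
            have : ((i.val - 1 : ℕ) : Fin k) = 0 :=
              add_eq_left.mp (by rw [ha, ← hb])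
            exact GadgetAux.cast_ne_zero hi2 this
          · exfalso
            rw [if_pos (by omega)] at ha
            rw [if_neg (by omega)] at hb
            have huv' : u = v := huv
            rw [← huv'] at hb
            have : ((j.val - 1 : ℕ) : Fin k) = 0 :=
              add_eq_left.mp (by rw [hb, ← ha])
            exact GadgetAux.cast_ne_zero hj2 this
          · exfalso
            rw [if_neg (by omega)] at ha
            rw [if_pos (by omega)] at hb
            have huv' : u = v := huv
            rw [← huv'] at hb
            have : ((i.val - 1 : ℕ) : Fin k) = 0 :=
              add_eq_left.mp (by rw [ha, ← hb])
            exact GadgetAux.cast_ne_zero hi2 this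
        · -- inter-gadget arc
          dsimp only at hA hi1 hj0
          rw [if_pos (by omega)] at ha
          rw [if_pos (by omega)] at hb
          exact Or.inr ⟨ha, hb, hA⟩
      have key : ∀ a b : V × Fin (k+1),
          Relation.TransGen (fun x y => x ∈ S' ∧ y ∈ S' ∧ (G.gadget k).Adj x y) a b →
          Relation.ReflTransGen R a.1 b.1 ∧
            (Relation.TransGen R a.1 b.1 ∨ (a.2.val = 0 ∧ b.2.val = 1 ∧ a.1 = b.1)) := by
        intro a b h
        induction h with
        | single h' =>
          rcases classify _ _ h'.1 h'.2.1 h'.2.2 with ⟨heq, h0, h1⟩ | hr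
          · exact ⟨by rw [heq], Or.inr ⟨h0, h1, heq⟩⟩
          · exact ⟨Relation.ReflTransGen.single hr, Or.inl (Relation.TransGen.single hr)⟩
        | tail h' harc ih =>
          rename_i b' c'
          rcases classify _ _ harc.1 harc.2.1 harc.2.2 with ⟨heq, h0, h1⟩ | hr
          · rcases ih.2 with ht | ⟨_, hb1, _⟩
            · exact ⟨by rw [← heq]; exact ih.1, Or.inl (by rw [← heq]; exact ht)⟩
            · omega
          · have ht : Relation.TransGen R a.1 c'.1 := Relation.TransGen.tail' ih.1 hr
            exact ⟨ht.to_reflTransGen, Or.inl ht⟩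
      rcases (key w w hw).2 with ht | ⟨h0, h1, _⟩
      · exact hf c w.1 ht
      · omega
    · -- backward: G' k-dicolourable → G k-dicolourable
      rintro ⟨f', hf'⟩
      -- u⁻ and u⁺ get the same colour
      have pm : ∀ u : V, f' (u, (0 : Fin (k+1))) = f' (u, (1 : Fin (k+1))) := by
        intro u
        by_contra hne
        have hval1 : ((1 : Fin (k+1)) : Fin (k+1)).val = 1 := by
          simp [Fin.val_one']
          omega
        have hval0 : ((0 : Fin (k+1)) : Fin (k+1)).val = 0 := rfl
        set h : {j : Fin (k+1) // j.val ≠ 1} → Fin k := fun j => f' (u, j.1) with hh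
        have hinj : Function.Injective h := by
          intro a b hab
          by_contra hab'
          have hne' : a.1 ≠ b.1 := fun hx => hab' (Subtype.ext hx)
          exact GadgetAux.no_digon _ (hf' (f' (u, a.1))) rfl hab.symm
            (GadgetAux.gadget_digon G k u hne' (Or.inl ⟨a.2, b.2⟩))
            (GadgetAux.gadget_digon G k u hne'.symm (Or.inl ⟨b.2, a.2⟩))
        have hcard : Fintype.card {j : Fin (k+1) // j.val ≠ 1} = Fintype.card (Fin k) := by
          have h1 : Fintype.card {j : Fin (k+1) // ¬ (j.val = 1)} =
              Fintype.card (Fin (k+1)) - Fintype.card {j : Fin (k+1) // j.val = 1} :=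
            Fintype.card_subtype_compl _
          have h2 : Fintype.card {j : Fin (k+1) // j.val = 1} = 1 := by
            have he : {j : Fin (k+1) // j.val = 1} ≃ {j : Fin (k+1) // j = ⟨1, by omega⟩} := by
              apply Equiv.subtypeEquivRight
              intro x
              constructor
              · intro hx; exact Fin.ext hx
              · intro hx; rw [hx]
            rw [Fintype.card_congr he, Fintype.card_subtype_eq]
          simp [h1, h2]
        have hsurj : Function.Surjective h :=
          ((Fintype.bijective_iff_injective_and_card h).mpr ⟨hinj, hcard⟩).2
        obtain ⟨j, hj⟩ := hsurj (f' (u, (1 : Fin (k+1))))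
        rcases Nat.lt_or_ge j.1.val 2 with hj2 | hj2
        · have hj0 : j.1.val = 0 := by have := j.2; omega
          have : j.1 = (0 : Fin (k+1)) := Fin.ext hj0
          rw [hh] at hj
          simp only at hj
          rw [this] at hj
          exact hne hj
        · have hne1 : (1 : Fin (k+1)) ≠ j.1 := by
            intro hx
            have := congrArg Fin.val hx
            rw [hval1] at this
            omega
          exact GadgetAux.no_digon _ (hf' (f' (u, (1 : Fin (k+1))))) rfl hj
            (GadgetAux.gadget_digon G k u hne1 (Or.inr ⟨by omega, by omega⟩))
            (GadgetAux.gadget_digon G k u hne1.symm (Or.inr ⟨by omega, by omega⟩))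
      refine ⟨fun u => f' (u, (0 : Fin (k+1))), ?_⟩
      intro c v hv
      set S' : Set (V × Fin (k+1)) := {w | f' w = c} with hS'
      have hval1 : ((1 : Fin (k+1)) : Fin (k+1)).val = 1 := by
        simp [Fin.val_one']
        omega
      have twostep : ∀ x y : V, f' (x, (0 : Fin (k+1))) = c → f' (y, (0 : Fin (k+1))) = c →
          G.Adj x y → Relation.TransGen (fun p q => p ∈ S' ∧ q ∈ S' ∧ (G.gadget k).Adj p q)
            (x, (0 : Fin (k+1))) (y, (0 : Fin (k+1))) := by
        intro x y hx hy hadj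
        have hx1 : f' (x, (1 : Fin (k+1))) = c := by rw [← pm x]; exact hx
        refine Relation.TransGen.tail (b := (x, (1 : Fin (k+1))))
          (Relation.TransGen.single ?_) ?_
        · exact ⟨hx, hx1, Or.inl ⟨rfl, Or.inl ⟨Fin.val_zero k, hval1⟩⟩⟩
        · exact ⟨hx1, hy, Or.inr ⟨hadj, hval1, Fin.val_zero k⟩⟩
      have key : ∀ a b : V, Relation.TransGen
          (fun x y => x ∈ {v | f' (v, (0 : Fin (k+1))) = c} ∧
            y ∈ {v | f' (v, (0 : Fin (k+1))) = c} ∧ G.Adj x y) a b →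
          Relation.TransGen (fun p q => p ∈ S' ∧ q ∈ S' ∧ (G.gadget k).Adj p q)
            (a, (0 : Fin (k+1))) (b, (0 : Fin (k+1))) := by
        intro a b h
        induction h with
        | single h' => exact twostep _ _ h'.1 h'.2.1 h'.2.2
        | tail h' harc ih => exact ih.trans (twostep _ _ harc.1 harc.2.1 harc.2.2)
      exact hf' c (v, (0 : Fin (k+1))) (key v v hv)
end

section
/- In any k-dicolouring of the gadget digraph G′ (constructed from G by replacing each vertex u with u⁻, u⁺, u₁, …, u_{k−1} where {u⁻, u₁,…,u_{k−1}} and {u⁺, u₁,…,u_{k−1}} induce symmetric complete digraphs and u⁻u⁺ is an arc), the vertices u⁻ and u⁺ receive the same colour for every vertex u of G. -/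
/-- Two vertices joined by a digon receive different colours. -/
lemma digon_ne_colour {W : Type} (H : Digraph' W) {k : ℕ} (f : W → Fin k)
    (hf : ∀ c : Fin k, H.AcyclicSet {x | f x = c}) {a b : W}
    (hab : H.Adj a b) (hba : H.Adj b a) : f a ≠ f b := by
  intro h
  have ha : a ∈ {x | f x = f a} := rfl
  have hb : b ∈ {x | f x = f a} := h.symm
  exact hf (f a) a ((Relation.TransGen.single ⟨ha, hb, hab⟩).tail ⟨hb, ha, hba⟩)

/-- In any `k`-dicolouring of the gadget digraph `G′`, the vertices `u⁻` and `u⁺`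
receive the same colour, for every vertex `u` of `G`. -/
theorem gadget_same_colour {V : Type} [Fintype V] (G : Digraph' V) (k : ℕ)
    (hk : 2 ≤ k) (f : V × Fin (k + 1) → Fin k)
    (hf : ∀ c : Fin k, (G.gadget k).AcyclicSet {x | f x = c}) :
    ∀ u : V, f (u, ⟨0, by omega⟩) = f (u, ⟨1, by omega⟩) := by
  intro u
  have hk1 : (1 : ℕ) < k + 1 := by omega
  -- colours of the middle vertices are pairwise distinct
  set F : Fin (k - 1) → Fin k := fun i => f (u, ⟨i.val + 2, by omega⟩) with hF
  have hFinj : Function.Injective F := by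
    intro i j hij
    by_contra hne
    have hne' : (⟨i.val + 2, by omega⟩ : Fin (k + 1)) ≠ ⟨j.val + 2, by omega⟩ := by
      intro h
      exact hne (Fin.ext (by simpa [Fin.ext_iff] using h))
    exact digon_ne_colour (G.gadget k) f hf (a := (u, ⟨i.val + 2, by omega⟩))
      (b := (u, ⟨j.val + 2, by omega⟩))
      (Or.inl ⟨rfl, Or.inr (Or.inl ⟨hne', Nat.le_add_left 2 _, Nat.le_add_left 2 _⟩)⟩)
      (Or.inl ⟨rfl, Or.inr (Or.inl ⟨hne'.symm, Nat.le_add_left 2 _, Nat.le_add_left 2 _⟩)⟩) hij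
  have h0 : ∀ i : Fin (k - 1), f (u, ⟨0, by omega⟩) ≠ F i := by
    intro i
    exact digon_ne_colour (G.gadget k) f hf
      (Or.inl ⟨rfl, Or.inr (Or.inr (Or.inl ⟨rfl, Nat.le_add_left 2 _⟩))⟩)
      (Or.inl ⟨rfl, Or.inr (Or.inr (Or.inr (Or.inl ⟨Nat.le_add_left 2 _, rfl⟩)))⟩)
  have h1 : ∀ i : Fin (k - 1), f (u, ⟨1, by omega⟩) ≠ F i := by
    intro i
    exact digon_ne_colour (G.gadget k) f hf
      (Or.inl ⟨rfl, Or.inr (Or.inr (Or.inr (Or.inr (Or.inl ⟨rfl, Nat.le_add_left 2 _⟩))))⟩)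
      (Or.inl ⟨rfl, Or.inr (Or.inr (Or.inr (Or.inr (Or.inr ⟨Nat.le_add_left 2 _, rfl⟩))))⟩)
  -- counting
  set T : Finset (Fin k) := Finset.univ.image F with hT
  have hcardT : T.card = k - 1 := by
    rw [hT, Finset.card_image_of_injective _ hFinj, Finset.card_univ, Fintype.card_fin]
  have hcardTc : Tᶜ.card = 1 := by
    have := Finset.card_compl T
    rw [hcardT, Fintype.card_fin] at this
    omega
  obtain ⟨a, ha⟩ := Finset.card_eq_one.mp hcardTc
  have m0 : f (u, ⟨0, by omega⟩) ∈ Tᶜ := by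
    simp only [Finset.mem_compl, hT, Finset.mem_image]
    rintro ⟨i, -, hi⟩; exact h0 i hi.symm
  have m1 : f (u, ⟨1, by omega⟩) ∈ Tᶜ := by
    simp only [Finset.mem_compl, hT, Finset.mem_image]
    rintro ⟨i, -, hi⟩; exact h1 i hi.symm
  rw [ha, Finset.mem_singleton] at m0 m1
  rw [m0, m1]
end
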